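/- Rankine–Hugoniot property of the Roe matrix: let γ > 1, let n = (n₁, n₂) ∈ ℝ² be a unit vector, and let U⁺ = (ρ⁺, m₁⁺, m₂⁺, E⁺) and U⁻ = (ρ⁻, m₁⁻, m₂⁻, E⁻) be two states with ρ^± > 0 and pressures p^± = (γ−1)(E^± − ((m₁^±)² + (m₂^±)²)/(2ρ^±)) > 0. Define the square-root-density weights w^± = √(ρ^±), the Roe-averaged velocities ṽᵢ = (w⁺ vᵢ⁺ + w⁻ vᵢ⁻)/(w⁺ + w⁻) (where vᵢ^± = mᵢ^±/ρ^±), the specific total enthalpies H^± = (E^± + p^±)/ρ^±, and the Roe-averaged enthalpy H̃ = (w⁺ H⁺ + w⁻ H⁻)/(w⁺ + w⁻). For any ρ̃ > 0, let Ũ = (ρ̃, ρ̃ṽ₁, ρ̃ṽ₂, Ẽ) with Ẽ = ρ̃(H̃ + ((γ−1)/2)(ṽ₁² + ṽ₂²))/γ (so that the state Ũ has velocity ṽ and specific total enthalpy H̃). Then Ũ lies in the domain of F_n and the derivative of the normal flux at the Roe state exactly reproduces the flux difference: DF_n(Ũ)(U⁺ − U⁻) = F_n(U⁺) − F_n(U⁻).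 In particular, the same identity holds for every choice of ρ̃ > 0, i.e., DF_n depends only on the velocity and the specific total enthalpy of the state at which it is evaluated. -/

import Mathlib

/-- The two-dimensional Euler normal flux in conservative variables `U = (ρ, m₁, m₂, E)`,
in the direction `n = (n₁, n₂)`:
`F_n(U) = n₁ F_x(U) + n₂ F_y(U)` with
`F_x(U) = (m₁, m₁v₁ + p, m₂v₁, v₁(E+p))`, `F_y(U) = (m₂, m₁v₂, m₂v₂ + p, v₂(E+p))`,
where `vᵢ = mᵢ/ρ` and `p = (γ−1)(E − (m₁² + m₂²)/(2ρ))`. -/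
noncomputable def eulerNormalFlux (γ n₁ n₂ : ℝ) (U : Fin 4 → ℝ) : Fin 4 → ℝ :=
  let ρ := U 0
  let m₁ := U 1
  let m₂ := U 2
  let E := U 3
  let v₁ := m₁ / ρ
  let v₂ := m₂ / ρ
  let p := (γ - 1) * (E - (m₁ ^ 2 + m₂ ^ 2) / (2 * ρ))
  ![n₁ * m₁ + n₂ * m₂,
    n₁ * (m₁ * v₁ + p) + n₂ * (m₁ * v₂),
    n₁ * (m₂ * v₁) + n₂ * (m₂ * v₂ + p),
    n₁ * (v₁ * (E + p)) + n₂ * (v₂ * (E + p))]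

set_option maxHeartbeats 2000000

theorem key (γ n₁ n₂ : ℝ) (x v : Fin 4 → ℝ) (hx : x 0 ≠ 0) :
    DifferentiableAt ℝ (eulerNormalFlux γ n₁ n₂) x ∧
    fderiv ℝ (eulerNormalFlux γ n₁ n₂) x v =
      ![n₁ * v 1 + n₂ * v 2,
        n₁ * ((2 * x 1 * v 1) / x 0 - x 1 ^ 2 * v 0 / x 0 ^ 2
              + (γ - 1) * (v 3 - (x 1 * v 1 + x 2 * v 2) / x 0 + (x 1 ^ 2 + x 2 ^ 2) * v 0 / (2 * x 0 ^ 2)))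
          + n₂ * ((v 1 * x 2 + x 1 * v 2) / x 0 - x 1 * x 2 * v 0 / x 0 ^ 2),
        n₁ * ((v 2 * x 1 + x 2 * v 1) / x 0 - x 2 * x 1 * v 0 / x 0 ^ 2)
          + n₂ * ((2 * x 2 * v 2) / x 0 - x 2 ^ 2 * v 0 / x 0 ^ 2
              + (γ - 1) * (v 3 - (x 1 * v 1 + x 2 * v 2) / x 0 + (x 1 ^ 2 + x 2 ^ 2) * v 0 / (2 * x 0 ^ 2))),
        n₁ * ((v 1 / x 0 - x 1 * v 0 / x 0 ^ 2) * (x 3 + (γ - 1) * (x 3 - (x 1 ^ 2 + x 2 ^ 2) / (2 * x 0)))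
              + (x 1 / x 0) * (v 3 + (γ - 1) * (v 3 - (x 1 * v 1 + x 2 * v 2) / x 0 + (x 1 ^ 2 + x 2 ^ 2) * v 0 / (2 * x 0 ^ 2))))
          + n₂ * ((v 2 / x 0 - x 2 * v 0 / x 0 ^ 2) * (x 3 + (γ - 1) * (x 3 - (x 1 ^ 2 + x 2 ^ 2) / (2 * x 0)))
              + (x 2 / x 0) * (v 3 + (γ - 1) * (v 3 - (x 1 * v 1 + x 2 * v 2) / x 0 + (x 1 ^ 2 + x 2 ^ 2) * v 0 / (2 * x 0 ^ 2)))) ] := by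
  have h0 := hasFDerivAt_apply (𝕜 := ℝ) (0 : Fin 4) x
  have h1 := hasFDerivAt_apply (𝕜 := ℝ) (1 : Fin 4) x
  have h2 := hasFDerivAt_apply (𝕜 := ℝ) (2 : Fin 4) x
  have h3 := hasFDerivAt_apply (𝕜 := ℝ) (3 : Fin 4) x
  have hinv : HasFDerivAt (fun u : Fin 4 → ℝ => (u 0)⁻¹)
      ((-ContinuousLinearMap.mulLeftRight ℝ ℝ (x 0)⁻¹ (x 0)⁻¹).comp
        (ContinuousLinearMap.proj 0)) x := (hasFDerivAt_inv' hx).comp x h0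
  have hP := ((h3.sub ((((h1.mul h1).add (h2.mul h2)).mul hinv).mul_const
      (2 : ℝ)⁻¹)).const_mul (γ - 1))
  have hc0 := (h1.const_mul n₁).add (h2.const_mul n₂)
  have hc1 := (((h1.mul (h1.mul hinv)).add hP).const_mul n₁).add
    ((h1.mul (h2.mul hinv)).const_mul n₂)
  have hc2 := ((h2.mul (h1.mul hinv)).const_mul n₁).add
    (((h2.mul (h2.mul hinv)).add hP).const_mul n₂)
  have hc3 := (((h1.mul hinv).mul (h3.add hP)).const_mul n₁).add
    (((h2.mul hinv).mul (h3.add hP)).const_mul n₂)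
  have hFeq : eulerNormalFlux γ n₁ n₂ = fun u i =>
      (![fun u : Fin 4 → ℝ => n₁ * u 1 + n₂ * u 2,
         fun u : Fin 4 → ℝ => n₁ * (u 1 * (u 1 * (u 0)⁻¹) + (γ - 1) * (u 3 - (u 1 * u 1 + u 2 * u 2) * (u 0)⁻¹ * (2:ℝ)⁻¹)) + n₂ * (u 1 * (u 2 * (u 0)⁻¹)),
         fun u : Fin 4 → ℝ => n₁ * (u 2 * (u 1 * (u 0)⁻¹)) + n₂ * (u 2 * (u 2 * (u 0)⁻¹) + (γ - 1) * (u 3 - (u 1 * u 1 + u 2 * u 2) * (u 0)⁻¹ * (2:ℝ)⁻¹)),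
         fun u : Fin 4 → ℝ => n₁ * ((u 1 * (u 0)⁻¹) * (u 3 + (γ - 1) * (u 3 - (u 1 * u 1 + u 2 * u 2) * (u 0)⁻¹ * (2:ℝ)⁻¹))) + n₂ * ((u 2 * (u 0)⁻¹) * (u 3 + (γ - 1) * (u 3 - (u 1 * u 1 + u 2 * u 2) * (u 0)⁻¹ * (2:ℝ)⁻¹)))] :
        Fin 4 → ((Fin 4 → ℝ) → ℝ)) i u := by
    funext u i
    have hi : i = 0 ∨ i = 1 ∨ i = 2 ∨ i = 3 := by omega
    rcases hi with h | h | h | h <;> subst h <;>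
      simp only [eulerNormalFlux, Matrix.cons_val_zero, Matrix.cons_val_one, Matrix.head_cons,
        Matrix.cons_val_two, Matrix.tail_cons, Matrix.cons_val_three] <;> ring
  constructor
  · rw [hFeq]
    exact differentiableAt_pi.mpr (by
      intro i
      fin_cases i
      · exact hc0.differentiableAt
      · exact hc1.differentiableAt
      · exact hc2.differentiableAt
      · exact hc3.differentiableAt)
  · conv_lhs => rw [hFeq]
    rw [fderiv_pi (by
      intro i
      fin_cases i
      · exact hc0.differentiableAt
      · exact hc1.differentiableAt
      · exact hc2.differentiableAt
      · exact hc3.differentiableAt)]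
    funext i
    have hi : i = 0 ∨ i = 1 ∨ i = 2 ∨ i = 3 := by omega
    rcases hi with h | h | h | h <;> subst h <;>
      simp only [ContinuousLinearMap.pi_apply, Matrix.cons_val_zero, Matrix.cons_val_one,
        Matrix.head_cons, Matrix.cons_val_two, Matrix.tail_cons, Matrix.cons_val_three]
    · refine (congrArg (fun L : (Fin 4 → ℝ) →L[ℝ] ℝ => L v) hc0.fderiv).trans ?_
      simp [ContinuousLinearMap.mulLeftRight_apply]
    · refine (congrArg (fun L : (Fin 4 → ℝ) →L[ℝ] ℝ => L v) hc1.fderiv).trans ?_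
      simp only [ContinuousLinearMap.add_apply, ContinuousLinearMap.coe_smul', Pi.smul_apply,
        ContinuousLinearMap.sub_apply, ContinuousLinearMap.comp_apply,
        ContinuousLinearMap.proj_apply, ContinuousLinearMap.neg_apply,
        ContinuousLinearMap.mulLeftRight_apply, smul_eq_mul, Pi.mul_apply, Pi.add_apply, Pi.sub_apply, Pi.pow_apply]
      field_simp
      ring
    · refine (congrArg (fun L : (Fin 4 → ℝ) →L[ℝ] ℝ => L v) hc2.fderiv).trans ?_
      simp only [ContinuousLinearMap.add_apply, ContinuousLinearMap.coe_smul', Pi.smul_apply,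
        ContinuousLinearMap.sub_apply, ContinuousLinearMap.comp_apply,
        ContinuousLinearMap.proj_apply, ContinuousLinearMap.neg_apply,
        ContinuousLinearMap.mulLeftRight_apply, smul_eq_mul, Pi.mul_apply, Pi.add_apply, Pi.sub_apply, Pi.pow_apply]
      field_simp
      ring
    · refine (congrArg (fun L : (Fin 4 → ℝ) →L[ℝ] ℝ => L v) hc3.fderiv).trans ?_
      simp only [ContinuousLinearMap.add_apply, ContinuousLinearMap.coe_smul', Pi.smul_apply,
        ContinuousLinearMap.sub_apply, ContinuousLinearMap.comp_apply,
        ContinuousLinearMap.proj_apply, ContinuousLinearMap.neg_apply,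
        ContinuousLinearMap.mulLeftRight_apply, smul_eq_mul, Pi.mul_apply, Pi.add_apply, Pi.sub_apply, Pi.pow_apply]
      field_simp
      ring

/-- Rankine–Hugoniot property of the Roe matrix: for any two admissible states `U⁺, U⁻` and any
`ρ̃ > 0`, the state `Ũ = (ρ̃, ρ̃ṽ₁, ρ̃ṽ₂, Ẽ)` built from the Roe-averaged velocity `ṽ` and
Roe-averaged specific total enthalpy `H̃` (with `Ẽ = ρ̃(H̃ + ((γ−1)/2)|ṽ|²)/γ`) lies in the
domain of `F_n`, and the Jacobian of the normal flux at `Ũ` exactly reproduces the flux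
difference: `DF_n(Ũ)(U⁺ − U⁻) = F_n(U⁺) − F_n(U⁻)`. -/
theorem eulerNormalFlux_roe_rankine_hugoniot (γ n₁ n₂ : ℝ) (hγ : 1 < γ)
    (hn : n₁ ^ 2 + n₂ ^ 2 = 1)
    (ρp mp₁ mp₂ Ep ρm mm₁ mm₂ Em : ℝ) (hρp : 0 < ρp) (hρm : 0 < ρm)
    (hpp : 0 < (γ - 1) * (Ep - (mp₁ ^ 2 + mp₂ ^ 2) / (2 * ρp)))
    (hpm : 0 < (γ - 1) * (Em - (mm₁ ^ 2 + mm₂ ^ 2) / (2 * ρm)))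
    (ρt : ℝ) (hρt : 0 < ρt) :
    let wp := Real.sqrt ρp
    let wm := Real.sqrt ρm
    let v₁t := (wp * (mp₁ / ρp) + wm * (mm₁ / ρm)) / (wp + wm)
    let v₂t := (wp * (mp₂ / ρp) + wm * (mm₂ / ρm)) / (wp + wm)
    let Hp := (Ep + (γ - 1) * (Ep - (mp₁ ^ 2 + mp₂ ^ 2) / (2 * ρp))) / ρp
    let Hm := (Em + (γ - 1) * (Em - (mm₁ ^ 2 + mm₂ ^ 2) / (2 * ρm))) / ρm
    let Ht := (wp * Hp + wm * Hm) / (wp + wm)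
    let Et := ρt * (Ht + ((γ - 1) / 2) * (v₁t ^ 2 + v₂t ^ 2)) / γ
    let Ut : Fin 4 → ℝ := ![ρt, ρt * v₁t, ρt * v₂t, Et]
    DifferentiableAt ℝ (eulerNormalFlux γ n₁ n₂) Ut ∧
      fderiv ℝ (eulerNormalFlux γ n₁ n₂) Ut
          (![ρp, mp₁, mp₂, Ep] - ![ρm, mm₁, mm₂, Em]) =
        eulerNormalFlux γ n₁ n₂ ![ρp, mp₁, mp₂, Ep] -
          eulerNormalFlux γ n₁ n₂ ![ρm, mm₁, mm₂, Em] := by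
  intro wp wm v₁t v₂t Hp Hm Ht Et Ut
  have hUt0 : Ut 0 ≠ 0 := by
    show (![ρt, ρt * v₁t, ρt * v₂t, Et] : Fin 4 → ℝ) 0 ≠ 0
    simpa using hρt.ne'
  obtain ⟨hd, he⟩ := key γ n₁ n₂ Ut (![ρp, mp₁, mp₂, Ep] - ![ρm, mm₁, mm₂, Em]) hUt0
  refine ⟨hd, ?_⟩
  rw [he]
  have hwp : (0:ℝ) < wp := Real.sqrt_pos.mpr hρp
  have hwm : (0:ℝ) < wm := Real.sqrt_pos.mpr hρm
  have hwp2 : wp ^ 2 = ρp := Real.sq_sqrt hρp.le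
  have hwm2 : wm ^ 2 = ρm := Real.sq_sqrt hρm.le
  have hs : wp + wm ≠ 0 := by positivity
  have hγ0 : γ ≠ 0 := by linarith
  funext i
  have hi : i = 0 ∨ i = 1 ∨ i = 2 ∨ i = 3 := by fin_cases i <;> decide
  have hUt : ∀ j, Ut j = ![ρt, ρt * v₁t, ρt * v₂t, Et] j := fun _ => rfl
  have hv1 : v₁t = (wp * (mp₁ / ρp) + wm * (mm₁ / ρm)) / (wp + wm) := rfl
  have hv2 : v₂t = (wp * (mp₂ / ρp) + wm * (mm₂ / ρm)) / (wp + wm) := rfl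
  have hEt : Et = ρt * ((wp * ((Ep + (γ - 1) * (Ep - (mp₁ ^ 2 + mp₂ ^ 2) / (2 * ρp))) / ρp) +
      wm * ((Em + (γ - 1) * (Em - (mm₁ ^ 2 + mm₂ ^ 2) / (2 * ρm))) / ρm)) / (wp + wm) +
      (γ - 1) / 2 * (v₁t ^ 2 + v₂t ^ 2)) / γ := rfl
  rcases hi with h | h | h | h <;> subst h <;>
    simp only [hUt, Pi.sub_apply, eulerNormalFlux, Matrix.cons_val_zero, Matrix.cons_val_one,
      Matrix.head_cons, Matrix.cons_val_two, Matrix.tail_cons, Matrix.cons_val_three]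
  · ring
  · rw [hv1, hv2, ← hwp2, ← hwm2]
    field_simp
    ring
  · rw [hv1, hv2, ← hwp2, ← hwm2]
    field_simp
    ring
  · rw [hEt, hv1, hv2, ← hwp2, ← hwm2]
    field_simp
    ring
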